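/- arXiv:1809.05304 — 3 statements merged into one kernel-verified Lean document; each statement's English description precedes it below -/
import Mathlib

section
/- For all u, v ∈ ℂ³, the real-linear functional w ↦ ψ₊(u,v,w) = Re det[u v w] on ℂ³ (viewed as a 6-dimensional real inner product space) has squared norm ‖ψ₊(u,v,·)‖² = ‖u‖²‖v‖² − |⟨u,v⟩|² = h² − ν², where ν = σ(u,v) = Im⟨u,v⟩ and h² = g(u,u)g(v,v) − g(u,v)² with g(u,v) = Re⟨u,v⟩. -/
noncomputable section

/-- The determinant of the 3×3 complex matrix with columns `u`, `v`, `w`. -/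
def detC (u v w : EuclideanSpace ℂ (Fin 3)) : ℂ :=
  Matrix.det (Matrix.of fun i j => ![u, v, w] j i)

/-- If `W` is the Riesz representative, with respect to the real inner product
`g(a,b) = Re⟪a,b⟫`, of the real-linear functional `w ↦ ψ₊(u,v,w) = Re det[u v w]`, then the
squared norm of that functional is
`g(W,W) = ‖u‖²‖v‖² − |⟨u,v⟩|² = (g(u,u)g(v,v) − g(u,v)²) − (Im⟨u,v⟩)² = h² − ν²`. -/
theorem norm_sq_of_psiPlus_contraction (u v W : EuclideanSpace ℂ (Fin 3))
    (hW : ∀ w : EuclideanSpace ℂ (Fin 3), (detC u v w).re = (inner ℂ W w : ℂ).re) :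
    (inner ℂ W W : ℂ).re = ‖u‖ ^ 2 * ‖v‖ ^ 2 - ‖(inner ℂ u v : ℂ)‖ ^ 2 ∧
    (inner ℂ W W : ℂ).re =
      ((inner ℂ u u : ℂ).re * (inner ℂ v v : ℂ).re - (inner ℂ u v : ℂ).re ^ 2)
        - (inner ℂ u v : ℂ).im ^ 2 := by
  set V : EuclideanSpace ℂ (Fin 3) :=
    (WithLp.equiv 2 (Fin 3 → ℂ)).symm
      ![star (u 1 * v 2 - u 2 * v 1), star (u 2 * v 0 - u 0 * v 2),
        star (u 0 * v 1 - u 1 * v 0)] with hV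
  have hdet : ∀ w : EuclideanSpace ℂ (Fin 3), detC u v w = (inner ℂ V w : ℂ) := by
    intro w
    simp only [detC, hV, PiLp.inner_apply, RCLike.inner_apply, Fin.sum_univ_three,
      Matrix.det_fin_three, Matrix.of_apply, Matrix.cons_val', Matrix.cons_val_zero,
      Matrix.cons_val_one, Matrix.head_cons, Matrix.cons_val_two, Matrix.tail_cons,
      Matrix.empty_val', Matrix.cons_val_fin_one, WithLp.equiv_symm_apply, PiLp.toLp_apply,
      star_sub, star_mul', starRingEnd_apply, star_star]
    ring
  have hWV : W = V := by
    have h0 : ∀ w : EuclideanSpace ℂ (Fin 3), (inner ℂ (W - V) w : ℂ).re = 0 := by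
      intro w
      rw [inner_sub_left]
      have := hW w
      rw [hdet w] at this
      rw [Complex.sub_re, ← this, sub_self]
    have h1 := h0 (W - V)
    have hn : ‖W - V‖ ^ 2 = 0 := by
      rw [norm_sq_eq_re_inner (𝕜 := ℂ), RCLike.re_to_complex]
      exact h1
    have := norm_eq_zero.mp (by nlinarith [norm_nonneg (W - V)])
    exact sub_eq_zero.mp this
  subst hWV
  have lagrange : (inner ℂ V V : ℂ) =
      (inner ℂ u u : ℂ) * (inner ℂ v v : ℂ) - (inner ℂ u v : ℂ) * (inner ℂ v u : ℂ) := by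
    simp only [hV, PiLp.inner_apply, RCLike.inner_apply, Fin.sum_univ_three,
      WithLp.equiv_symm_apply, PiLp.toLp_apply, Matrix.cons_val_zero, Matrix.cons_val_one,
      Matrix.head_cons, Matrix.cons_val_two, Matrix.tail_cons,
      star_sub, star_mul', map_sub, map_mul, starRingEnd_apply, star_star]
    ring
  have hvu : (inner ℂ v u : ℂ) = starRingEnd ℂ (inner ℂ u v : ℂ) := (inner_conj_symm v u).symm
  have him_u : (inner ℂ u u : ℂ).im = 0 := by
    simpa [RCLike.im_to_complex] using inner_self_im (𝕜 := ℂ) u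
  have him_v : (inner ℂ v v : ℂ).im = 0 := by
    simpa [RCLike.im_to_complex] using inner_self_im (𝕜 := ℂ) v
  have key : (inner ℂ V V : ℂ).re =
      ((inner ℂ u u : ℂ).re * (inner ℂ v v : ℂ).re - (inner ℂ u v : ℂ).re ^ 2)
        - (inner ℂ u v : ℂ).im ^ 2 := by
    rw [lagrange, hvu]
    simp only [Complex.sub_re, Complex.mul_re, Complex.conj_re, Complex.conj_im,
      him_u, him_v]
    ring
  refine ⟨?_, key⟩
  rw [key]
  have hu : ‖u‖ ^ 2 = (inner ℂ u u : ℂ).re := by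
    rw [norm_sq_eq_re_inner (𝕜 := ℂ), RCLike.re_to_complex]
  have hv : ‖v‖ ^ 2 = (inner ℂ v v : ℂ).re := by
    rw [norm_sq_eq_re_inner (𝕜 := ℂ), RCLike.re_to_complex]
  have huv : ‖(inner ℂ u v : ℂ)‖ ^ 2 = (inner ℂ u v : ℂ).re ^ 2 + (inner ℂ u v : ℂ).im ^ 2 := by
    rw [Complex.sq_norm, Complex.normSq_apply]; ring
  rw [hu, hv, huv]; ring
end
end

section
/- Let u, v ∈ ℂ³ with u ≠ 0. If σ(u,v) = Im⟨u,v⟩ = 0 and the real-linear functional w ↦ ψ₊(u,v,w) = Re det[u v w] vanishes identically on ℂ³, then v = η u for some real number η (so v is a real scalar multiple of u). -/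
noncomputable section

lemma detC_expand (u v w : EuclideanSpace ℂ (Fin 3)) :
    detC u v w =
      u 0 * v 1 * w 2 - u 0 * w 1 * v 2 - v 0 * u 1 * w 2
      + v 0 * w 1 * u 2 + w 0 * u 1 * v 2 - w 0 * v 1 * u 2 := by
  simp [detC, Matrix.det_fin_three, Matrix.of_apply]

lemma fin3_forall {P : Fin 3 → Prop} (h0 : P 0) (h1 : P 1) (h2 : P 2) : ∀ i, P i := by
  intro i
  fin_cases i
  exacts [h0, h1, h2]

lemma fin3_exists {P : Fin 3 → Prop} (h : ∃ i, P i) : P 0 ∨ P 1 ∨ P 2 := by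
  obtain ⟨i, hi⟩ := h
  fin_cases i
  exacts [Or.inl hi, Or.inr (Or.inl hi), Or.inr (Or.inr hi)]

/-- If `u ≠ 0`, `σ(u,v) = Im⟪u,v⟫ = 0` and the functional `w ↦ ψ₊(u,v,w) = Re det[u v w]`
vanishes identically, then `v` is a real scalar multiple of `u`. -/
theorem real_multiple_of_sigma_psiPlus_vanish (u v : EuclideanSpace ℂ (Fin 3))
    (hu : u ≠ 0) (hσ : (inner ℂ u v : ℂ).im = 0)
    (hψ : ∀ w : EuclideanSpace ℂ (Fin 3), (detC u v w).re = 0) :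
    ∃ η : ℝ, v = η • u := by
  -- Step 1: the full complex determinant vanishes for all w
  have hdet : ∀ w, detC u v w = 0 := by
    intro w
    have h1 := hψ w
    have h2 := hψ ((Complex.I : ℂ) • w)
    have hsm : detC u v ((Complex.I : ℂ) • w) = Complex.I * detC u v w := by
      simp [detC_expand, PiLp.smul_apply, smul_eq_mul]
      ring
    rw [hsm, Complex.mul_re, Complex.I_re, Complex.I_im] at h2
    have him : (detC u v w).im = 0 := by linarith
    exact Complex.ext h1 (by simp [him])
  -- Step 2: cross-product relations
  have e0 : detC u v (EuclideanSpace.single 0 1) = 0 := hdet _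
  have e1 : detC u v (EuclideanSpace.single 1 1) = 0 := hdet _
  have e2 : detC u v (EuclideanSpace.single 2 1) = 0 := hdet _
  rw [detC_expand] at e0 e1 e2
  simp [EuclideanSpace.single_apply] at e0 e1 e2
  -- Step 3: v = c • u for a complex c
  obtain ⟨c, hc⟩ : ∃ c : ℂ, ∀ i, v i = c * u i := by
    have hex : u 0 ≠ 0 ∨ u 1 ≠ 0 ∨ u 2 ≠ 0 := by
      refine fin3_exists (P := fun i => u i ≠ 0) ?_
      by_contra h
      push_neg at h
      exact hu (by ext i; simpa using h i)
    rcases hex with hk | hk | hk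
    · exact ⟨v 0 / u 0, fin3_forall (by field_simp)
        (by field_simp; linear_combination e2) (by field_simp; linear_combination -e1)⟩
    · exact ⟨v 1 / u 1, fin3_forall (by field_simp; linear_combination -e2)
        (by field_simp) (by field_simp; linear_combination e0)⟩
    · exact ⟨v 2 / u 2, fin3_forall (by field_simp; linear_combination e1)
        (by field_simp; linear_combination -e0) (by field_simp)⟩
  -- Step 4: c is real via the inner product
  have hinner : (inner ℂ u v : ℂ) = c * (‖u‖ ^ 2 : ℝ) := by
    have hv : v = c • u := by
      ext i; simp [hc i, PiLp.smul_apply, smul_eq_mul]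
    rw [hv, inner_smul_right, inner_self_eq_norm_sq_to_K]
    norm_num
  have hnu : (0:ℝ) < ‖u‖ ^ 2 := by
    have : ‖u‖ ≠ 0 := norm_ne_zero_iff.mpr hu
    positivity
  have hcim : c.im = 0 := by
    have h : c.im * (‖u‖ ^ 2) = 0 := by
      rw [hinner] at hσ
      simpa [Complex.mul_im, ← Complex.ofReal_pow] using hσ
    rcases mul_eq_zero.mp h with h | h
    · exact h
    · exact absurd h (ne_of_gt hnu)
  refine ⟨c.re, ?_⟩
  ext i
  rw [PiLp.smul_apply, hc i]
  simp [Complex.ext_iff, Complex.mul_re, Complex.mul_im, hcim, Complex.real_smul]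
end
end

section
/- Let u, v ∈ ℂ³ be linearly independent over ℂ, and let w ∈ ℂ³ be the vector representing the real-linear functional x ↦ Re det[u v x] with respect to the real inner product g(a,b) = Re⟨a,b⟩, i.e. Re det[u v x] = g(w, x) for all x. Then w ≠ 0 and the six vectors u, iu, v, iv, w, iw form a basis of ℂ³ over ℝ. -/
noncomputable section

lemma detC_self1 (u v : EuclideanSpace ℂ (Fin 3)) : detC u v u = 0 := by
  simp [detC, Matrix.det_fin_three]

lemma detC_self2 (u v : EuclideanSpace ℂ (Fin 3)) : detC u v v = 0 := by
  simp [detC, Matrix.det_fin_three]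

lemma detC_smul (u v x : EuclideanSpace ℂ (Fin 3)) (c : ℂ) :
    detC u v (c • x) = c * detC u v x := by
  simp [detC, Matrix.det_fin_three]; ring

-- inner with w is 0 given hw facts
lemma inner_eq_zero_of_det (u v w y : EuclideanSpace ℂ (Fin 3))
    (hw : ∀ x : EuclideanSpace ℂ (Fin 3), (detC u v x).re = (inner ℂ w x : ℂ).re)
    (h0 : detC u v y = 0) : (inner ℂ w y : ℂ) = 0 := by
  have h1 := hw y
  have h2 := hw (Complex.I • y)
  rw [detC_smul, h0, mul_zero] at h2
  rw [h0] at h1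
  rw [inner_smul_right] at h2
  apply Complex.ext
  · exact h1.symm
  · simpa [Complex.mul_re] using h2.symm

-- det nonzero from linear independence
lemma detC_ne_zero (u v x : EuclideanSpace ℂ (Fin 3))
    (h : LinearIndependent ℂ ![u, v, x]) : detC u v x ≠ 0 := by
  set A : Matrix (Fin 3) (Fin 3) ℂ := Matrix.of fun i j => ![u, v, x] j i with hA
  have hmap : LinearIndependent ℂ
      (((EuclideanSpace.equiv (Fin 3) ℂ).toLinearEquiv :
        EuclideanSpace ℂ (Fin 3) →ₗ[ℂ] (Fin 3 → ℂ)) ∘ ![u, v, x]) :=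
    h.map' _ (EuclideanSpace.equiv (Fin 3) ℂ).toLinearEquiv.ker
  have h' : LinearIndependent ℂ (fun j => A.transpose j) := hmap
  have hu := Matrix.linearIndependent_cols_iff_isUnit.mp h'
  rw [Matrix.isUnit_iff_isUnit_det] at hu
  intro h0
  exact hu.ne_zero h0

/-- If `u, v ∈ ℂ³` are linearly independent over `ℂ` and `w` represents the real-linear
functional `x ↦ Re det[u v x]` with respect to `g(a,b) = Re⟪a,b⟫`, then `w ≠ 0` and
`u, iu, v, iv, w, iw` form a real basis of `ℂ³`. -/
theorem real_basis_from_psiPlus_dual (u v w : EuclideanSpace ℂ (Fin 3))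
    (huv : LinearIndependent ℂ ![u, v])
    (hw : ∀ x : EuclideanSpace ℂ (Fin 3), (detC u v x).re = (inner ℂ w x : ℂ).re) :
    w ≠ 0 ∧
    LinearIndependent ℝ ![u, Complex.I • u, v, Complex.I • v, w, Complex.I • w] ∧
    Submodule.span ℝ
        (Set.range ![u, Complex.I • u, v, Complex.I • v, w, Complex.I • w]) = ⊤ := by
  classical
  -- w ≠ 0
  have hdim : Module.finrank ℂ (EuclideanSpace ℂ (Fin 3)) = 3 := by simp
  have hwne : w ≠ 0 := by
    rintro rfl
    -- then det[u v x] = 0 for all x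
    have hz : ∀ x, detC u v x = 0 := by
      intro x
      have h1 := hw x
      have h2 := hw (Complex.I • x)
      rw [detC_smul] at h2
      simp only [inner_zero_left, Complex.zero_re] at h1 h2
      apply Complex.ext
      · exact h1
      · simpa [Complex.mul_re] using h2
    -- pick x outside span {u, v}
    have hrange : Set.range ![u, v] = {u, v} := by
      simp [Matrix.range_cons, Matrix.range_empty, Set.pair_comm]
    have hne : Submodule.span ℂ (Set.range ![u, v]) ≠ ⊤ := by
      rw [hrange]
      refine (span_lt_top_of_card_lt_finrank ?_).ne
      rw [hdim]
      calc ({u, v} : Set (EuclideanSpace ℂ (Fin 3))).toFinset.card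
          ≤ 2 := by
            rw [Set.toFinset_insert, Set.toFinset_singleton]
            exact Finset.card_insert_le _ _ |>.trans (by simp)
        _ < 3 := by norm_num
    obtain ⟨x, hx⟩ : ∃ x, x ∉ Submodule.span ℂ (Set.range ![u, v]) := by
      by_contra hc
      push_neg at hc
      exact hne (Submodule.eq_top_iff'.mpr hc)
    have h3 : LinearIndependent ℂ ![u, v, x] := by
      have : ![u, v, x] = Fin.snoc ![u, v] x := by
        funext k; fin_cases k <;> rfl
      rw [this, linearIndependent_fin_snoc]
      exact ⟨huv, hx⟩
    exact detC_ne_zero u v x h3 (hz x)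
  -- inner products vanish
  have hwu : (inner ℂ w u : ℂ) = 0 := inner_eq_zero_of_det u v w u hw (detC_self1 u v)
  have hwv : (inner ℂ w v : ℂ) = 0 := inner_eq_zero_of_det u v w v hw (detC_self2 u v)
  -- w not in span of u, v
  have hwspan : w ∉ Submodule.span ℂ (Set.range ![u, v]) := by
    intro hmem
    rw [show Set.range ![u, v] = {u, v} by
      simp [Matrix.range_cons, Matrix.range_empty, Set.pair_comm]] at hmem
    obtain ⟨a, b, hab⟩ := Submodule.mem_span_pair.mp hmem
    have hz : (inner ℂ w w : ℂ) = 0 := by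
      calc (inner ℂ w w : ℂ) = inner ℂ w (a • u + b • v) := by rw [hab]
        _ = a * inner ℂ w u + b * inner ℂ w v := by
            rw [inner_add_right, inner_smul_right, inner_smul_right]
        _ = 0 := by rw [hwu, hwv]; ring
    exact hwne (inner_self_eq_zero.mp hz)
  -- complex basis u v w
  have h3 : LinearIndependent ℂ ![u, v, w] := by
    have : ![u, v, w] = Fin.snoc ![u, v] w := by
      funext k; fin_cases k <;> rfl
    rw [this, linearIndependent_fin_snoc]
    exact ⟨huv, hwspan⟩
  have hcard : Fintype.card (Fin 3) = Module.finrank ℂ (EuclideanSpace ℂ (Fin 3)) := by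
    simp [hdim]
  let b : Module.Basis (Fin 3) ℂ (EuclideanSpace ℂ (Fin 3)) :=
    basisOfLinearIndependentOfCardEqFinrank h3 hcard
  have hb : ⇑b = ![u, v, w] := coe_basisOfLinearIndependentOfCardEqFinrank h3 hcard
  -- real basis
  let B : Module.Basis (Fin 2 × Fin 3) ℝ (EuclideanSpace ℂ (Fin 3)) :=
    Complex.basisOneI.smulTower b
  let e : Fin 6 ≃ Fin 2 × Fin 3 :=
    Equiv.ofBijective ![(0,0),(1,0),(0,1),(1,1),(0,2),(1,2)] (by decide)
  have hB : ⇑(B.reindex e.symm) = ![u, Complex.I • u, v, Complex.I • v, w, Complex.I • w] := by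
    funext k
    fin_cases k <;>
      simp [B, e, Module.Basis.smulTower_apply, hb, Complex.coe_basisOneI] <;> rfl
  refine ⟨hwne, ?_, ?_⟩
  · rw [← hB]; exact (B.reindex e.symm).linearIndependent
  · rw [← hB]; exact (B.reindex e.symm).span_eq
end
end
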